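/- Let λ = (λ₁,…,λₙ) with all λ_i > 0, F(λ) = (σ_n/σ_{n-k})^{1/k}(λ), and σ_k(1/λ₁,…,1/λₙ) = C(n,k) (equivalently F(λ) = C(n,k)^{-1/k}). Then k F^{k-1} F^{11} ≤ 1/(λ₁ C(n,k)) and Σ_i F^{ii}(λ) ≥ C(n,k)^{-1/k}. -/

import Mathlib

/-!
On the positive cone `σₙ(λ) / σₙ₋ₖ(λ) = 1 / σₖ(μ)` with `μ = 1/λ`, so `F = σₖ(μ)^(-1/k)` and
`F^{ii} = F μᵢ Sᵢ / (k σₖ(μ))`, where `Sᵢ` is the sum of the monomials of `σₖ(μ)` containing `μᵢ`.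
Then `k F^{k-1} F^{ii} = μᵢ Sᵢ / σₖ(μ)² ≤ μᵢ / σₖ(μ)` because `Sᵢ ≤ σₖ(μ)`.
For the trace, `∑ᵢ μᵢ Sᵢ = ∑_{|T|=k} μ_T ∑_{i∈T} μᵢ`, and AM-GM followed by Bernoulli's inequality
gives `μ_T ∑_{i∈T} μᵢ ≥ (k+1) μ_T - 1` for every `T`. Since `σₖ(μ) = C(n,k)` is the number of
`k`-subsets, summing yields `∑ᵢ μᵢ Sᵢ ≥ k σₖ(μ)`, that is `∑ᵢ F^{ii} ≥ F = C(n,k)^(-1/k)`.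
-/

open Finset Filter Topology

theorem add_one_mul_prod_sub_one_le_prod_mul_sum {α : Type*} (s : Finset α) {μ : α → ℝ}
    (hμ : ∀ i ∈ s, 0 ≤ μ i) :
    ((#s : ℝ) + 1) * ∏ i ∈ s, μ i - 1 ≤ (∏ i ∈ s, μ i) * ∑ i ∈ s, μ i := by
  obtain rfl | hs := s.eq_empty_or_nonempty
  · simp
  set m : ℝ := (#s : ℝ)
  set p := ∏ i ∈ s, μ i
  have hm : 0 < m := by simp [m, hs.card_pos]
  have hp : 0 ≤ p := prod_nonneg hμ
  have amgm : m * p ^ m⁻¹ ≤ ∑ i ∈ s, μ i := by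
    have h := Real.geom_mean_le_arith_mean_weighted s (fun _ => m⁻¹) μ (fun _ _ => by positivity)
      (by simp [m, hm.ne']) hμ
    rw [Real.finsetProd_rpow s μ hμ, ← mul_sum] at h
    rwa [← le_div_iff₀' hm, div_eq_inv_mul]
  have bernoulli : 1 + (1 + m⁻¹) * (p - 1) ≤ p * p ^ m⁻¹ := by
    have h := one_add_mul_self_le_rpow_one_add (s := p - 1) (by linarith)
      (le_add_of_nonneg_right (inv_nonneg.2 hm.le))
    rwa [add_sub_cancel, Real.rpow_add' hp (by positivity), Real.rpow_one] at h
  calc (m + 1) * p - 1 = m * (1 + (1 + m⁻¹) * (p - 1)) := by field_simp; ring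
    _ ≤ m * (p * p ^ m⁻¹) := by gcongr
    _ = p * (m * p ^ m⁻¹) := by ring
    _ ≤ p * ∑ i ∈ s, μ i := by gcongr

section ElemSymm

variable {ι : Type*} [Fintype ι]

def elemSymm {R : Type*} [CommSemiring R] (l : ℕ) (v : ι → R) : R :=
  ∑ t ∈ powersetCard l univ, ∏ i ∈ t, v i

theorem elemSymm_card {R : Type*} [CommSemiring R] (v : ι → R) :
    elemSymm (Fintype.card ι) v = ∏ i, v i := by
  rw [elemSymm, ← card_univ, powersetCard_self, sum_singleton]

theorem elemSymm_inv {K : Type*} [Field K] {j : ℕ} (hj : j ≤ Fintype.card ι) {v : ι → K}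
    (hv : ∀ i, v i ≠ 0) :
    elemSymm j v⁻¹ = elemSymm (Fintype.card ι - j) v / ∏ i, v i := by
  classical
  rw [eq_div_iff (prod_ne_zero_iff.2 fun i _ => hv i), elemSymm, elemSymm, sum_mul]
  refine sum_nbij' (fun t => tᶜ) (fun t => tᶜ) (fun t ht => ?_) (fun t ht => ?_)
    (fun t _ => compl_compl t) (fun t _ => compl_compl t) (fun t _ => ?_)
  · simp_all [card_compl]
  · simp_all [card_compl, Nat.sub_sub_self hj]
  · rw [← prod_mul_prod_compl t v, Pi.inv_def, prod_inv_distrib, inv_mul_cancel_left₀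
      (prod_ne_zero_iff.2 fun i _ => hv i)]

theorem elemSymm_card_div_elemSymm_card_sub {K : Type*} [Field K] {j : ℕ}
    (hj : j ≤ Fintype.card ι) {v : ι → K} (hv : ∀ i, v i ≠ 0) :
    elemSymm (Fintype.card ι) v / elemSymm (Fintype.card ι - j) v = (elemSymm j v⁻¹)⁻¹ := by
  rw [elemSymm_inv hj hv, elemSymm_card, inv_div]

theorem elemSymm_nonneg {R : Type*} [CommSemiring R] [PartialOrder R] [IsOrderedRing R] (l : ℕ)
    {v : ι → R} (hv : ∀ i, 0 ≤ v i) : 0 ≤ elemSymm l v :=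
  sum_nonneg fun _ _ => prod_nonneg fun i _ => hv i

theorem natCast_mul_elemSymm_le_sum_prod_mul_sum {k : ℕ} {μ : ι → ℝ}
    (hμ : ∀ i, 0 ≤ μ i) (hσ : elemSymm k μ = (Fintype.card ι).choose k) :
    k * elemSymm k μ ≤ ∑ t ∈ powersetCard k univ, (∏ i ∈ t, μ i) * ∑ i ∈ t, μ i := by
  calc (k : ℝ) * elemSymm k μ
      = ∑ t ∈ powersetCard k univ, (((#t : ℝ) + 1) * ∏ i ∈ t, μ i - 1) := by
        rw [sum_sub_distrib, sum_congr rfl fun t ht => by rw [(mem_powersetCard.1 ht).2],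
          ← mul_sum, ← elemSymm, sum_const, card_powersetCard, card_univ, nsmul_eq_mul, mul_one,
          ← hσ]
        ring
    _ ≤ _ := sum_le_sum fun t _ => add_one_mul_prod_sub_one_le_prod_mul_sum t fun i _ => hμ i

noncomputable def elemSymmInvRoot (k : ℕ) (v : ι → ℝ) : ℝ :=
  elemSymm k v⁻¹ ^ (-(1 : ℝ) / k)

theorem elemSymm_card_div_elemSymm_card_sub_rpow {k : ℕ} (hk : k ≤ Fintype.card ι) {v : ι → ℝ}
    (hv : ∀ i, 0 < v i) :
    (elemSymm (Fintype.card ι) v / elemSymm (Fintype.card ι - k) v) ^ ((1 : ℝ) / k) =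
      elemSymmInvRoot k v := by
  have hσ : 0 ≤ elemSymm k v⁻¹ := elemSymm_nonneg k fun i => inv_nonneg.2 (hv i).le
  rw [elemSymmInvRoot, neg_div, Real.rpow_neg hσ,
    elemSymm_card_div_elemSymm_card_sub hk fun i => (hv i).ne', Real.inv_rpow hσ]

variable [DecidableEq ι]

def elemSymmContaining {R : Type*} [CommSemiring R] (l : ℕ) (v : ι → R) (i : ι) : R :=
  ∑ t ∈ powersetCard l univ with i ∈ t, ∏ j ∈ t, v j

theorem elemSymmContaining_le_elemSymm {R : Type*} [CommSemiring R] [PartialOrder R]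
    [IsOrderedRing R] (l : ℕ) {v : ι → R} (hv : ∀ i, 0 ≤ v i) (i : ι) :
    elemSymmContaining l v i ≤ elemSymm l v :=
  sum_le_sum_of_subset_of_nonneg (filter_subset _ _) fun _ _ _ => prod_nonneg fun j _ => hv j

theorem sum_mul_elemSymmContaining {R : Type*} [CommSemiring R] (l : ℕ) (v : ι → R) :
    ∑ i, v i * elemSymmContaining l v i =
      ∑ t ∈ powersetCard l univ, (∏ j ∈ t, v j) * ∑ i ∈ t, v i := by
  simp only [elemSymmContaining, mul_sum]
  rw [sum_comm' (t' := powersetCard l univ) (s' := id) (by simp [and_comm])]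
  exact sum_congr rfl fun t _ => sum_congr rfl fun i _ => mul_comm _ _

theorem hasFDerivAt_elemSymm_inv {𝕜 : Type*} [NontriviallyNormedField 𝕜] (l : ℕ) {v : ι → 𝕜}
    (hv : ∀ i, v i ≠ 0) :
    HasFDerivAt (fun w : ι → 𝕜 => elemSymm l w⁻¹)
      (-∑ i, (v⁻¹ i * elemSymmContaining l v⁻¹ i) • ContinuousLinearMap.proj (R := 𝕜) i) v := by
  have hinv : ∀ i, HasFDerivAt (fun w : ι → 𝕜 => (w i)⁻¹)
      ((-(v i ^ 2)⁻¹) • ContinuousLinearMap.proj (R := 𝕜) i) v := fun i =>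
    (hasDerivAt_inv (hv i)).comp_hasFDerivAt v (hasFDerivAt_apply i v)
  refine (HasFDerivAt.fun_sum fun t _ => HasFDerivAt.finsetProd fun i _ => hinv i).congr_fderiv ?_
  ext w
  simp only [elemSymmContaining, _root_.sum_apply, smul_apply, neg_apply,
    ContinuousLinearMap.proj_apply, smul_eq_mul, neg_mul, mul_neg, sum_neg_distrib, neg_inj,
    sum_mul, mul_sum]
  rw [sum_comm' (t' := univ) (s' := fun i => (powersetCard l univ).filter (i ∈ ·)) (by simp)]
  refine sum_congr rfl fun i _ => sum_congr rfl fun t ht => ?_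
  rw [← mul_prod_erase t _ (mem_filter.1 ht).2]
  simp only [Pi.inv_apply]
  field_simp

theorem fderiv_elemSymmInvRoot_single (k : ℕ) {v : ι → ℝ} (hv : ∀ i, v i ≠ 0)
    (hσ : elemSymm k v⁻¹ ≠ 0) (i : ι) :
    fderiv ℝ (elemSymmInvRoot k) v (Pi.single i 1) =
      elemSymmInvRoot k v / (k * elemSymm k v⁻¹) * (v⁻¹ i * elemSymmContaining k v⁻¹ i) := by
  have hderiv : HasFDerivAt (elemSymmInvRoot k) _ v :=
    (hasFDerivAt_elemSymm_inv k hv).rpow_const (Or.inl hσ)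
  rw [hderiv.fderiv, elemSymmInvRoot, Real.rpow_sub_one hσ]
  simp only [smul_neg, neg_apply, smul_apply, _root_.sum_apply, ContinuousLinearMap.proj_apply,
    Pi.single_apply, smul_eq_mul, mul_ite, mul_one, mul_zero, sum_ite_eq', mem_univ, if_true]
  field_simp

theorem natCast_mul_pow_mul_fderiv_elemSymmInvRoot_le {k : ℕ} (hk : k ≠ 0) {v : ι → ℝ}
    (hv : ∀ i, 0 < v i) (hσ : 0 < elemSymm k v⁻¹) (i : ι) :
    k * elemSymmInvRoot k v ^ (k - 1) * fderiv ℝ (elemSymmInvRoot k) v (Pi.single i 1) ≤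
      1 / (v i * elemSymm k v⁻¹) := by
  have hpow : elemSymmInvRoot k v ^ k = (elemSymm k v⁻¹)⁻¹ := by
    rw [elemSymmInvRoot, ← Real.rpow_natCast, ← Real.rpow_mul hσ.le,
      div_mul_cancel₀ _ (Nat.cast_ne_zero.2 hk), Real.rpow_neg_one]
  calc (k : ℝ) * elemSymmInvRoot k v ^ (k - 1) * fderiv ℝ (elemSymmInvRoot k) v (Pi.single i 1)
      = elemSymmInvRoot k v ^ (k - 1) * elemSymmInvRoot k v / elemSymm k v⁻¹ *
          (v⁻¹ i * elemSymmContaining k v⁻¹ i) := by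
        rw [fderiv_elemSymmInvRoot_single k (fun j => (hv j).ne') hσ.ne']
        field_simp
    _ ≤ (elemSymm k v⁻¹)⁻¹ / elemSymm k v⁻¹ * (v⁻¹ i * elemSymm k v⁻¹) := by
        rw [pow_sub_one_mul hk, hpow]
        gcongr
        · exact inv_nonneg.2 (hv i).le
        · exact elemSymmContaining_le_elemSymm k (fun j => inv_nonneg.2 (hv j).le) i
    _ = 1 / (v i * elemSymm k v⁻¹) := by
        simp only [Pi.inv_apply]
        field_simp

theorem elemSymmInvRoot_le_sum_fderiv {k : ℕ} (hk : k ≠ 0) (hkc : k ≤ Fintype.card ι)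
    {v : ι → ℝ} (hv : ∀ i, 0 < v i) (hσ : elemSymm k v⁻¹ = (Fintype.card ι).choose k) :
    elemSymmInvRoot k v ≤ ∑ i, fderiv ℝ (elemSymmInvRoot k) v (Pi.single i 1) := by
  have hσ0 : 0 < elemSymm k v⁻¹ := hσ ▸ Nat.cast_pos.2 (Nat.choose_pos hkc)
  have hμ : ∀ i, 0 ≤ v⁻¹ i := fun i => inv_nonneg.2 (hv i).le
  calc elemSymmInvRoot k v
      = elemSymmInvRoot k v / (k * elemSymm k v⁻¹) * (k * elemSymm k v⁻¹) := by
        field_simp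
    _ ≤ elemSymmInvRoot k v / (k * elemSymm k v⁻¹) *
          ∑ t ∈ powersetCard k univ, (∏ j ∈ t, v⁻¹ j) * ∑ i ∈ t, v⁻¹ i := by
        gcongr
        · exact div_nonneg (Real.rpow_nonneg hσ0.le _) (by positivity)
        · exact natCast_mul_elemSymm_le_sum_prod_mul_sum hμ hσ
    _ = ∑ i, fderiv ℝ (elemSymmInvRoot k) v (Pi.single i 1) := by
        rw [← sum_mul_elemSymmContaining, mul_sum]
        simp_rw [fderiv_elemSymmInvRoot_single k (fun j => (hv j).ne') hσ0.ne']

end ElemSymm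

/-- If all `λ_i > 0` and `σ_k(1/λ) = C(n,k)`, then for
`F = (σ_n/σ_{n−k})^{1/k}` one has `k F^{k−1} F^{ii} ≤ 1/(λ_i C(n,k))` and
`Σ_i F^{ii} ≥ C(n,k)^{−1/k}`. -/
theorem stmt_17 (n k : ℕ) (hk : 1 ≤ k) (hkn : k < n)
    (esymm : ℕ → (Fin n → ℝ) → ℝ)
    (hesymm : ∀ l v, esymm l v = ∑ t ∈ Finset.powersetCard l Finset.univ, ∏ i ∈ t, v i)
    (F : (Fin n → ℝ) → ℝ)
    (hF : ∀ v, F v = (esymm n v / esymm (n - k) v) ^ ((1 : ℝ) / k))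
    (lam : Fin n → ℝ) (hpos : ∀ i, 0 < lam i)
    (hconstraint : esymm k (fun i => (lam i)⁻¹) = n.choose k) :
    (∀ i, (k : ℝ) * F lam ^ (k - 1) * fderiv ℝ F lam (Pi.single i 1)
        ≤ 1 / (lam i * n.choose k)) ∧
    (n.choose k : ℝ) ^ (-(1 : ℝ) / k) ≤ ∑ i, fderiv ℝ F lam (Pi.single i 1) := by
  obtain rfl : esymm = elemSymm := funext fun l => funext fun v => hesymm l v
  have hk0 : k ≠ 0 := by omega
  have hkc : k ≤ Fintype.card (Fin n) := by simpa using hkn.le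
  have hσ : elemSymm k lam⁻¹ = (Fintype.card (Fin n)).choose k := by
    rw [Fintype.card_fin]; exact hconstraint
  have hF_eq : F =ᶠ[𝓝 lam] elemSymmInvRoot k := by
    filter_upwards [eventually_all.2 fun i =>
      (continuous_apply i).continuousAt.eventually (lt_mem_nhds (hpos i))] with v hv
    simpa [hF] using elemSymm_card_div_elemSymm_card_sub_rpow hkc hv
  rw [hF_eq.fderiv_eq, hF_eq.eq_of_nhds]
  refine ⟨fun i => ?_, ?_⟩
  · simpa [hσ] using natCast_mul_pow_mul_fderiv_elemSymmInvRoot_le hk0 hpos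
      (hσ ▸ Nat.cast_pos.2 (Nat.choose_pos hkc)) i
  · simpa [elemSymmInvRoot, hσ] using elemSymmInvRoot_le_sum_fderiv hk0 hkc hpos hσ
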